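/- Let n, k be positive integers and let g be a permutation of {0,…,kn−1} of wreath-product form: there exist σ ∈ S_n and τ_0,…,τ_{n−1} ∈ S_k such that g(ik+j) = σ(i)k + τ_i(j) for all 0 ≤ i < n, 0 ≤ j < k. Then for every n×(kn) matrix X over ℂ one has wrdet_k(X·P(g)) = (sgn σ)^k · wrdet_k(X), where P(g) is the permutation matrix with (i,j)-entry δ_{i,g(j)}. -/

import Mathlib

/-- The number of cycles of a permutation, counting fixed points as cycles. -/
def cycleCount {N : ℕ} (σ : Equiv.Perm (Fin N)) : ℕ :=
  σ.cycleType.card + (Finset.univ.filter fun x => σ x = x).card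

/-- ν(σ) = N − c(σ), where c(σ) is the number of cycles of σ (fixed points counted). -/
def nuPerm {N : ℕ} (σ : Equiv.Perm (Fin N)) : ℕ := N - cycleCount σ

/-- The alpha-determinant of a square matrix over a commutative ℚ-algebra. -/
noncomputable def adet {R : Type*} [CommRing R] [Algebra ℚ R] (α : ℚ) {N : ℕ}
    (X : Matrix (Fin N) (Fin N) R) : R :=
  ∑ σ : Equiv.Perm (Fin N),
    algebraMap ℚ R (α ^ nuPerm σ) * ∏ i, X (σ i) i

/-- The k-wreath determinant of an n × (kn) matrix: wrdet_k(X) = adet_{-1/k}(X ⊗ 1_{k,1}),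
where `X ⊗ 1_{k,1}` is the kn × kn matrix in which each row of `X` is repeated `k`
consecutive times (row `i` of the blowup is row `⌊i/k⌋` of `X`). -/
noncomputable def wrdet {R : Type*} [CommRing R] [Algebra ℚ R] (k : ℕ) {n : ℕ}
    (X : Matrix (Fin n) (Fin (n * k)) R) : R :=
  adet (-(1 : ℚ) / k) (Matrix.of fun i j : Fin (n * k) => X i.divNat j)

/-- The element `i*k + j` of `Fin (n*k)`: position `j` inside the `i`-th
consecutive block of size `k`. -/
def blockIdx {n k : ℕ} (i : Fin n) (j : Fin k) : Fin (n * k) :=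
  ⟨(i : ℕ) * k + j, by
    calc (i : ℕ) * k + (j : ℕ) < (i : ℕ) * k + k := Nat.add_lt_add_left j.isLt _
      _ = ((i : ℕ) + 1) * k := by ring
      _ ≤ n * k := Nat.mul_le_mul_right k i.isLt⟩

/-!
At `α = -1/k` the α-determinant is a sum over colourings. Since
`k^N (-1/k)^{ν(ρ)} = sgn ρ · k^{c(ρ)}`, and `k^{c(ρ)}` counts the colourings `φ : [N] → [k]`
constant on the cycles of `ρ`, we get `k^N adet_{-1/k}(Y) = ∑_φ ∏_m det(Y restricted to φ⁻¹(m))`.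

For the blown-up matrix of `X`, a colour class meeting some block twice has two equal rows; otherwise,
by counting, every colour class meets every block exactly once. The wreath permutation `g` maps the
block of `x` to the block of `g x` through `σ`, so replacing `φ` by `φ ∘ g⁻¹` turns each
colour-class determinant of `X·P(g)` into that of `X` with its rows permuted by `σ`: one factor
`sgn σ` per colour.
-/

open Equiv Equiv.Perm Finset

theorem comp_pow_eq_self {α β : Type*} {ρ : Perm α} {φ : α → β} (h : φ ∘ ρ = φ) (n : ℕ) :
    φ ∘ ⇑(ρ ^ n) = φ := by
  induction n with
  | zero => rfl
  | succ n ih => rw [pow_succ, coe_mul, ← Function.comp_assoc, ih, h]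

theorem card_comp_eq_self {α : Type*} [Finite α] (β : Type*) (ρ : Perm α) :
    Nat.card {φ : α → β // φ ∘ ρ = φ} =
      Nat.card β ^ Nat.card (Quotient (SameCycle.setoid ρ)) := by
  have hinv (φ : α → β) : φ ∘ ρ = φ ↔ SameCycle.setoid ρ ≤ Setoid.ker φ := by
    refine ⟨fun h x y hxy => ?_, fun h => funext fun x => h (SameCycle.refl ρ x).apply_left⟩
    obtain ⟨n, -, rfl⟩ := SameCycle.exists_nat_pow_eq hxy
    exact (congrFun (comp_pow_eq_self h n) x).symm
  rw [Nat.card_congr ((Equiv.subtypeEquivRight hinv).trans (Setoid.liftEquiv _)), Nat.card_fun]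

section CycleType

variable {α : Type*} [Fintype α] [DecidableEq α]

theorem card_quotient_sameCycle (ρ : Perm α) :
    Nat.card (Quotient (SameCycle.setoid ρ)) =
      Multiset.card ρ.cycleType + Fintype.card (Function.fixedPoints ρ) := by
  obtain ⟨a⟩ := Basis.nonempty ρ
  have ha_moved (c : ρ.cycleFactorsFinset) : ρ (a c) ≠ a c := by
    rw [← mem_support, ← cycleOf_mem_cycleFactorsFinset_iff, a.cycleOf_eq]
    exact c.2
  let G : ρ.cycleFactorsFinset ⊕ Function.fixedPoints ρ → Quotient (SameCycle.setoid ρ) :=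
    Sum.elim (fun c => ⟦a c⟧) (fun x => ⟦x.1⟧)
  have hG : Function.Bijective G := by
    constructor
    · rintro (c | x) (d | y) h <;>
        simp only [G, Sum.elim_inl, Sum.elim_inr, Quotient.eq, Sum.inl.injEq, Sum.inr.injEq,
          reduceCtorEq] at h ⊢
      · rw [Subtype.ext_iff, ← a.cycleOf_eq c, ← a.cycleOf_eq d]
        exact SameCycle.cycleOf_eq h
      · exact ha_moved c (h.eq_of_right y.2 ▸ y.2)
      · exact ha_moved d (h.eq_of_left x.2 ▸ x.2)
      · exact Subtype.ext (h.eq_of_left x.2)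
    · rintro ⟨x⟩
      by_cases hx : ρ x = x
      · exact ⟨.inr ⟨x, hx⟩, rfl⟩
      · have hc : ρ.cycleOf x ∈ ρ.cycleFactorsFinset :=
          cycleOf_mem_cycleFactorsFinset_iff.mpr (mem_support.mpr hx)
        exact ⟨.inl ⟨_, hc⟩, Quotient.sound (a.sameCycle hc)⟩
  rw [← Nat.card_eq_of_bijective G hG, Nat.card_sum, Nat.card_eq_fintype_card,
    Nat.card_eq_fintype_card, Fintype.card_coe, cycleType_def, Multiset.card_map]
  rfl

theorem two_mul_card_cycleType_le_sum (ρ : Perm α) :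
    2 * Multiset.card ρ.cycleType ≤ ρ.cycleType.sum := by
  simpa [mul_comm] using Multiset.card_nsmul_le_sum fun _ => two_le_of_mem_cycleType

end CycleType

section CycleCount

variable {N : ℕ}

theorem cycleCount_eq_card_quotient (ρ : Perm (Fin N)) :
    cycleCount ρ = Nat.card (Quotient (SameCycle.setoid ρ)) := by
  rw [card_quotient_sameCycle, cycleCount, Fintype.card_subtype]
  rfl

theorem cycleCount_eq (ρ : Perm (Fin N)) :
    cycleCount ρ = Multiset.card ρ.cycleType + (N - ρ.cycleType.sum) := by
  rw [cycleCount_eq_card_quotient, card_quotient_sameCycle, card_fixedPoints, Fintype.card_fin]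

theorem cycleCount_le (ρ : Perm (Fin N)) : cycleCount ρ ≤ N := by
  have h := two_mul_card_cycleType_le_sum ρ
  have hN := sum_cycleType_le ρ
  rw [Fintype.card_fin] at hN
  rw [cycleCount_eq]
  omega

theorem nuPerm_eq (ρ : Perm (Fin N)) :
    nuPerm ρ = ρ.cycleType.sum - Multiset.card ρ.cycleType := by
  have hN := sum_cycleType_le ρ
  rw [Fintype.card_fin] at hN
  rw [nuPerm, cycleCount_eq]
  omega

theorem sign_eq_neg_one_pow_nuPerm (ρ : Perm (Fin N)) : sign ρ = (-1) ^ nuPerm ρ := by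
  have h := two_mul_card_cycleType_le_sum ρ
  rw [sign_of_cycleType, nuPerm_eq,
    show ρ.cycleType.sum + Multiset.card ρ.cycleType =
      ρ.cycleType.sum - Multiset.card ρ.cycleType + 2 * Multiset.card ρ.cycleType by omega,
    pow_add, pow_mul, Int.units_sq, one_pow, mul_one]

theorem natCast_pow_mul_neg_inv_pow_nuPerm {k : ℕ} (hk : k ≠ 0) (ρ : Perm (Fin N)) :
    (k : ℚ) ^ N * (-1 / k) ^ nuPerm ρ =
      (sign ρ : ℤ) * Nat.card {φ : Fin N → Fin k // φ ∘ ρ = φ} := by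
  have hN : (k : ℚ) ^ N = k ^ nuPerm ρ * k ^ cycleCount ρ := by
    rw [← pow_add, nuPerm, Nat.sub_add_cancel (cycleCount_le ρ)]
  rw [card_comp_eq_self, ← cycleCount_eq_card_quotient, sign_eq_neg_one_pow_nuPerm, hN,
    Nat.card_eq_fintype_card, Fintype.card_fin]
  push_cast
  rw [div_pow, neg_pow]
  field_simp

end CycleCount

theorem prod_det_toSquareBlock {ι β R : Type*} [Fintype ι] [DecidableEq ι] [Fintype β]
    [LinearOrder β] [CommRing R] (Y : Matrix ι ι R) (φ : ι → β) :
    ∏ m, (Y.toSquareBlock φ m).det =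
      ∑ ρ : Perm ι, if φ ∘ ρ = φ then sign ρ • ∏ i, Y (ρ i) i else 0 := by
  let D : Matrix ι ι R := Matrix.of fun x y => if φ x = φ y then Y x y else 0
  have hD : D.BlockTriangular φ := fun x y h => if_neg h.ne'
  have hblock (m : β) : D.toSquareBlock φ m = Y.toSquareBlock φ m := by
    ext x y
    simp [D, Matrix.toSquareBlock_def, x.2, y.2]
  simp_rw [← hblock, ← hD.det_fintype, Matrix.det_apply, D, Matrix.of_apply,
    Fintype.prod_ite_zero, funext_iff, Function.comp_apply]
  refine Finset.sum_congr rfl fun ρ _ => ?_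
  split_ifs <;> simp

theorem natCast_pow_mul_adet_eq_sum_prod_det {R : Type*} [CommRing R] [Algebra ℚ R] {N k : ℕ}
    (hk : k ≠ 0) (Y : Matrix (Fin N) (Fin N) R) :
    (k : R) ^ N * adet (-1 / k) Y = ∑ φ : Fin N → Fin k, ∏ m, (Y.toSquareBlock φ m).det := by
  simp_rw [prod_det_toSquareBlock, adet, Finset.mul_sum]
  rw [Finset.sum_comm]
  refine Finset.sum_congr rfl fun ρ _ => ?_
  rw [← Finset.sum_filter, Finset.sum_const, ← mul_assoc, ← map_natCast (algebraMap ℚ R),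
    ← map_pow, ← map_mul, natCast_pow_mul_neg_inv_pow_nuPerm hk, Nat.card_eq_fintype_card,
    Fintype.card_subtype, map_mul, map_intCast, map_natCast, nsmul_eq_mul, Units.smul_def,
    zsmul_eq_mul]
  ring

theorem bijective_restrict_fiber {ι κ β : Type*} [Fintype ι] [Fintype κ] [Fintype β]
    [DecidableEq β] {p : ι → κ} {φ : ι → β}
    (hcard : Fintype.card ι = Fintype.card κ * Fintype.card β)
    (hinj : ∀ m, Function.Injective fun x : {x // φ x = m} => p x) (m : β) :
    Function.Bijective fun x : {x // φ x = m} => p x := by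
  have hle (m : β) : Fintype.card {x // φ x = m} ≤ Fintype.card κ :=
    Fintype.card_le_of_injective _ (hinj m)
  have hsum : ∑ m, Fintype.card {x // φ x = m} = ∑ _m : β, Fintype.card κ := by
    rw [← Fintype.card_sigma, Fintype.card_congr (Equiv.sigmaFiberEquiv φ), hcard,
      Finset.sum_const, Finset.card_univ, smul_eq_mul, mul_comm]
  rw [Fintype.bijective_iff_injective_and_card]
  exact ⟨hinj m, (Finset.sum_eq_sum_iff_of_le fun m _ => hle m).mp hsum m (Finset.mem_univ m)⟩

theorem det_submatrix_perm_comp_equiv {S κ R : Type*} [Fintype S] [DecidableEq S] [Fintype κ]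
    [DecidableEq κ] [CommRing R] (A : Matrix κ S R) (σ : Perm κ) (f : S ≃ κ) :
    (A.submatrix (σ ∘ f) id).det = sign σ * (A.submatrix f id).det := by
  have h : A.submatrix (σ ∘ f) id =
      (A.submatrix f id).submatrix ((f.trans σ).trans f.symm) id := by
    ext x y
    simp
  rw [h, Matrix.det_permute, sign_trans_trans_symm]

theorem prod_det_toSquareBlock_submatrix_perm_comp {ι κ R : Type*} [Fintype ι] [DecidableEq ι]
    [Fintype κ] [DecidableEq κ] [CommRing R] {k : ℕ}
    (hcard : Fintype.card ι = Fintype.card κ * k) (Y : Matrix κ ι R) (p : ι → κ) (σ : Perm κ)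
    (φ : ι → Fin k) :
    ∏ m, ((Y.submatrix (σ ∘ p) id).toSquareBlock φ m).det =
      sign σ ^ k * ∏ m, ((Y.submatrix p id).toSquareBlock φ m).det := by
  by_cases hinj : ∀ m, Function.Injective fun x : {x // φ x = m} => p x
  · rw [← Fin.prod_const, ← Finset.prod_mul_distrib]
    refine Finset.prod_congr rfl fun m _ => ?_
    have hbij := bijective_restrict_fiber (by rwa [Fintype.card_fin]) hinj m
    exact det_submatrix_perm_comp_equiv (Y.submatrix id Subtype.val) σ (Equiv.ofBijective _ hbij)
  · obtain ⟨m, hm⟩ := not_forall.mp hinj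
    obtain ⟨x, y, hxy, hne⟩ := Function.not_injective_iff.mp hm
    have hzero (q : ι → κ) (hq : q x = q y) : ((Y.submatrix q id).toSquareBlock φ m).det = 0 :=
      Matrix.det_zero_of_row_eq hne (funext fun z => by simp [Matrix.toSquareBlock_def, hq])
    rw [Finset.prod_eq_zero (Finset.mem_univ m) (hzero (σ ∘ p) (congrArg σ hxy)),
      Finset.prod_eq_zero (Finset.mem_univ m) (hzero p hxy), mul_zero]

theorem det_toSquareBlock_submatrix_equiv_self {ι β R : Type*} [Fintype ι] [DecidableEq ι]
    [DecidableEq β] [CommRing R] (M : Matrix ι ι R) (g : Perm ι) (φ : ι → β) (m : β) :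
    ((M.submatrix g g).toSquareBlock φ m).det = (M.toSquareBlock (φ ∘ g.symm) m).det := by
  let e : {x // φ x = m} ≃ {x // (φ ∘ g.symm) x = m} := g.subtypeEquiv fun x => by simp
  rw [← Matrix.det_submatrix_equiv_self e]
  rfl

theorem prod_det_toSquareBlock_comp_symm {ι κ R : Type*} [Fintype ι] [DecidableEq ι]
    [Fintype κ] [DecidableEq κ] [CommRing R] {k : ℕ}
    (hcard : Fintype.card ι = Fintype.card κ * k) (X : Matrix κ ι R) {p : ι → κ} {g : Perm ι}
    {σ : Perm κ} (hpg : ∀ x, p (g x) = σ (p x)) (φ : ι → Fin k) :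
    ∏ m, ((X.submatrix p id).toSquareBlock (φ ∘ g.symm) m).det =
      sign σ ^ k * ∏ m, ((X.submatrix p g).toSquareBlock φ m).det := by
  have h : (X.submatrix p id).submatrix g g = (X.submatrix id g).submatrix (σ ∘ p) id := by
    ext x y
    simp [hpg]
  simp_rw [← det_toSquareBlock_submatrix_equiv_self, h,
    prod_det_toSquareBlock_submatrix_perm_comp hcard]
  rfl

theorem mul_of_ite_eq_eq_submatrix {κ ι ι' R : Type*} [Fintype ι] [DecidableEq ι]
    [NonAssocSemiring R] (X : Matrix κ ι R) (g : ι' → ι) :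
    X * Matrix.of (fun a b => if a = g b then (1 : R) else 0) = X.submatrix id g := by
  ext i b
  simp [Matrix.mul_apply]

theorem blockIdx_eq_finProdFinEquiv {n k : ℕ} (i : Fin n) (j : Fin k) :
    blockIdx i j = finProdFinEquiv (i, j) :=
  Fin.ext (by simp [blockIdx, mul_comm, add_comm])

theorem divNat_blockIdx {n k : ℕ} (i : Fin n) (j : Fin k) : (blockIdx i j).divNat = i := by
  rw [blockIdx_eq_finProdFinEquiv]
  exact congrArg Prod.fst (finProdFinEquiv.symm_apply_apply (i, j))

theorem divNat_apply_of_apply_blockIdx {n k : ℕ} {g : Fin (n * k) → Fin (n * k)}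
    {σ : Fin n → Fin n} {τ : Fin n → Fin k → Fin k}
    (hg : ∀ i j, g (blockIdx i j) = blockIdx (σ i) (τ i j)) (x : Fin (n * k)) :
    (g x).divNat = σ x.divNat := by
  obtain ⟨⟨i, j⟩, rfl⟩ := finProdFinEquiv.surjective x
  rw [← blockIdx_eq_finProdFinEquiv, hg, divNat_blockIdx, divNat_blockIdx]

theorem wrdet_mul_wreathPerm_general (n k : ℕ) (hk : 0 < k)
    (g : Equiv.Perm (Fin (n * k)))
    (σ : Equiv.Perm (Fin n)) (τ : Fin n → Equiv.Perm (Fin k))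
    (hg : ∀ (i : Fin n) (j : Fin k), g (blockIdx i j) = blockIdx (σ i) (τ i j))
    (X : Matrix (Fin n) (Fin (n * k)) ℂ) :
    wrdet k (X * Matrix.of fun a b : Fin (n * k) => if a = g b then (1 : ℂ) else 0)
      = ((Equiv.Perm.sign σ : ℤ) : ℂ) ^ k * wrdet k X := by
  have hcard : Fintype.card (Fin (n * k)) = Fintype.card (Fin n) * k := by simp
  have hsign : ((sign σ : ℤ) : ℂ) ^ k * ((sign σ : ℤ) : ℂ) ^ k = 1 := by
    rw [← mul_pow, ← Int.cast_mul, ← Units.val_mul, Int.units_mul_self, Units.val_one,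
      Int.cast_one, one_pow]
  refine mul_left_cancel₀ (pow_ne_zero (n * k) (Nat.cast_ne_zero.mpr hk.ne')) ?_
  rw [mul_left_comm, wrdet, wrdet, mul_of_ite_eq_eq_submatrix,
    natCast_pow_mul_adet_eq_sum_prod_det hk.ne', natCast_pow_mul_adet_eq_sum_prod_det hk.ne',
    Finset.mul_sum]
  refine Fintype.sum_equiv (Equiv.arrowCongr g (Equiv.refl (Fin k))) _ _ fun φ => ?_
  change ∏ m, ((X.submatrix Fin.divNat g).toSquareBlock φ m).det =
    _ * ∏ m, ((X.submatrix Fin.divNat id).toSquareBlock (φ ∘ g.symm) m).det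
  rw [prod_det_toSquareBlock_comp_symm hcard X (divNat_apply_of_apply_blockIdx hg), ← mul_assoc,
    hsign, one_mul]

/-- Let g be a permutation of {0,…,kn−1} of wreath-product form: g(ik+j) = σ(i)k + τ_i(j)
for some σ ∈ S_n and τ_0,…,τ_{n−1} ∈ S_k. Then for every n×(kn) matrix X over ℂ,
wrdet_k(X·P(g)) = (sgn σ)^k · wrdet_k(X). -/
theorem wrdet_mul_wreathPerm (n k : ℕ) (hn : 0 < n) (hk : 0 < k)
    (g : Equiv.Perm (Fin (n * k)))
    (σ : Equiv.Perm (Fin n)) (τ : Fin n → Equiv.Perm (Fin k))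
    (hg : ∀ (i : Fin n) (j : Fin k), g (blockIdx i j) = blockIdx (σ i) (τ i j))
    (X : Matrix (Fin n) (Fin (n * k)) ℂ) :
    wrdet k (X * Matrix.of fun a b : Fin (n * k) => if a = g b then (1 : ℂ) else 0)
      = ((Equiv.Perm.sign σ : ℤ) : ℂ) ^ k * wrdet k X :=
  wrdet_mul_wreathPerm_general n k hk g σ τ hg X
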